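/- arXiv:1702.02647 — 6 statements merged into one kernel-verified Lean document; each statement's English description precedes it below -/
import Mathlib

section
/- Let F be an infinite field, n ≥ 1, and let λ = (λ_{ijk}) ∈ F^(n³) be a structure vector. Fix q = (q_1,...,q_n) ∈ ℤⁿ and suppose λ_{ijk} = 0 whenever q_i + q_j - q_k < 0. Define λ(q) ∈ F^(n³) by λ(q)_{ijk} = λ_{ijk} if q_i + q_j - q_k ≤ 0 and λ(q)_{ijk} = 0 otherwise. Then λ(q) lies in the Zariski closure of the GL(n,F)-orbit of λ. -/
open scoped BigOperators

/-- Change-of-basis action of `GL(n,F)` on structure vectors in `F^(n³)`. -/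
def actSV {F : Type*} [Field F] {n : ℕ} (g : GL (Fin n) F)
    (lam : Fin n → Fin n → Fin n → F) : Fin n → Fin n → Fin n → F :=
  fun a b c => ∑ i, ∑ j, ∑ k,
    (g : Matrix (Fin n) (Fin n) F) i a * (g : Matrix (Fin n) (Fin n) F) j b *
      ((g⁻¹ : GL (Fin n) F) : Matrix (Fin n) (Fin n) F) c k * lam i j k

/-- The `GL(n,F)`-orbit of a structure vector. -/
def orbitSV {F : Type*} [Field F] {n : ℕ} (lam : Fin n → Fin n → Fin n → F) :
    Set (Fin n → Fin n → Fin n → F) :=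
  {mu | ∃ g : GL (Fin n) F, mu = actSV g lam}

/-- Zariski closure of a set of structure vectors: the common zero locus of all
polynomials vanishing on the set. -/
def zClosure {F : Type*} [Field F] {n : ℕ} (S : Set (Fin n → Fin n → Fin n → F)) :
    Set (Fin n → Fin n → Fin n → F) :=
  {mu | ∀ p : MvPolynomial (Fin n × Fin n × Fin n) F,
      (∀ lam ∈ S, MvPolynomial.eval (fun t => lam t.1 t.2.1 t.2.2) p = 0) →
      MvPolynomial.eval (fun t => mu t.1 t.2.1 t.2.2) p = 0}

/-- diagonal GL element from a family of units -/
def diagGL {F : Type*} [Field F] {n : ℕ} (u : Fin n → Fˣ) : GL (Fin n) F where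
  val := Matrix.diagonal fun i => (u i : F)
  inv := Matrix.diagonal fun i => ((u i)⁻¹ : Fˣ)
  val_inv := by
    rw [Matrix.diagonal_mul_diagonal]
    simp [Matrix.diagonal_one]
  inv_val := by
    rw [Matrix.diagonal_mul_diagonal]
    simp [Matrix.diagonal_one]

lemma actSV_diag {F : Type*} [Field F] {n : ℕ} (u : Fin n → Fˣ)
    (lam : Fin n → Fin n → Fin n → F) (a b c : Fin n) :
    actSV (diagGL u) lam a b c = (u a : F) * (u b : F) * ((u c)⁻¹ : Fˣ) * lam a b c := by
  have hinv : ((diagGL u)⁻¹ : GL (Fin n) F) = diagGL (fun i => (u i)⁻¹) := by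
    ext1
    rfl
  simp only [actSV, hinv, diagGL, Units.val_mk, Matrix.diagonal_apply]
  rw [Finset.sum_eq_single a, Finset.sum_eq_single b, Finset.sum_eq_single c] <;>
    simp +contextual [eq_comm]

theorem grading_degeneration' {F : Type*} [Field F] [Infinite F] {n : ℕ} (hn : 1 ≤ n)
    (lam : Fin n → Fin n → Fin n → F) (q : Fin n → ℤ)
    (h : ∀ i j k, q i + q j - q k < 0 → lam i j k = 0) :
    ∀ p : MvPolynomial (Fin n × Fin n × Fin n) F,
      (∀ mu, (∃ g : GL (Fin n) F, mu = actSV g lam) →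
        MvPolynomial.eval (fun t => mu t.1 t.2.1 t.2.2) p = 0) →
      MvPolynomial.eval
        (fun t => if q t.1 + q t.2.1 - q t.2.2 ≤ 0 then lam t.1 t.2.1 t.2.2 else 0) p = 0 := by
  intro p hp
  set e : Fin n × Fin n × Fin n → ℤ := fun t => q t.1 + q t.2.1 - q t.2.2 with he
  set P : Polynomial F := MvPolynomial.eval₂ Polynomial.C
    (fun t => Polynomial.C (lam t.1 t.2.1 t.2.2) * Polynomial.X ^ (e t).toNat) p with hP
  have keval : ∀ τ : F, Polynomial.eval τ P =
      MvPolynomial.eval (fun t => lam t.1 t.2.1 t.2.2 * τ ^ (e t).toNat) p := by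
    intro τ
    have := MvPolynomial.eval₂_comp_left (Polynomial.evalRingHom τ) Polynomial.C
      (fun t => Polynomial.C (lam t.1 t.2.1 t.2.2) * Polynomial.X ^ (e t).toNat) p
    simp only [Polynomial.coe_evalRingHom] at this
    rw [hP, this]
    rw [show (Polynomial.evalRingHom τ).comp Polynomial.C = RingHom.id F by
      ext x; simp]
    rw [MvPolynomial.eval₂_id]
    exact congrArg (fun f => MvPolynomial.eval f p) (by funext t; simp)
  have hroot : ∀ τ : F, τ ≠ 0 → Polynomial.eval τ P = 0 := by
    intro τ hτ
    rw [keval]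
    have hτu : IsUnit τ := hτ.isUnit
    obtain ⟨u, rfl⟩ := hτu
    have h0 := hp (actSV (diagGL fun i => u ^ q i) lam) ⟨_, rfl⟩
    rw [← h0]
    refine congrArg (fun f => MvPolynomial.eval f p) ?_
    funext t
    rw [actSV_diag]
    rcases le_or_gt 0 (e t) with h0 | h0
    · have : ((u ^ q t.1 : Fˣ) : F) * ((u ^ q t.2.1 : Fˣ) : F) *
          (((u ^ q t.2.2)⁻¹ : Fˣ) : F) = ((u ^ (e t) : Fˣ) : F) := by
        rw [← Units.val_mul, ← Units.val_mul, ← zpow_neg, ← zpow_add, ← zpow_add]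
        rfl
      have h2 : ((u ^ e t : Fˣ) : F) = (u : F) ^ (e t).toNat := by
        have h3 : u ^ e t = u ^ ((e t).toNat : ℤ) := by rw [Int.toNat_of_nonneg h0]
        rw [h3, zpow_natCast, Units.val_pow_eq_pow_val]
      rw [this, h2, mul_comm]
    · rw [h _ _ _ h0, mul_zero, zero_mul]
  have hPz : P = 0 := by
    apply Polynomial.eq_zero_of_infinite_isRoot
    apply Set.Infinite.mono (s := {x : F | x ≠ 0})
    · exact fun x hx => hroot x hx
    · exact (Set.finite_singleton (0 : F)).infinite_compl
  have := keval 0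
  rw [hPz] at this
  simp only [Polynomial.eval_zero] at this
  refine Eq.trans ?_ this.symm
  refine congrArg (fun f => MvPolynomial.eval f p) ?_
  funext t
  rcases le_or_gt (e t) 0 with h0 | h0
  · rw [if_pos h0, show (e t).toNat = 0 by omega, pow_zero, mul_one]
  · rw [if_neg (not_le.mpr h0), zero_pow (by omega), mul_zero]

/-- over an infinite field, if `λ_{ijk} = 0` whenever `q_i + q_j - q_k < 0`,
then the structure vector `λ(q)` obtained by keeping only the entries with
`q_i + q_j - q_k ≤ 0` lies in the Zariski closure of the orbit of `λ`. -/
theorem grading_degeneration {F : Type*} [Field F] [Infinite F] {n : ℕ} (hn : 1 ≤ n)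
    (lam : Fin n → Fin n → Fin n → F) (q : Fin n → ℤ)
    (h : ∀ i j k, q i + q j - q k < 0 → lam i j k = 0) :
    (fun i j k => if q i + q j - q k ≤ 0 then lam i j k else 0) ∈
      zClosure (orbitSV lam) := by
  intro p hp
  exact grading_degeneration' hn lam q h p (fun mu hmu => hp mu hmu)
end

section
/- Let F be an infinite field, n ≥ 2, and let g be an n-dimensional F-algebra with an m-dimensional ideal g₁, where 1 ≤ m < n. Then g degenerates to the algebra direct sum g₁ ⊕ a_{n-m}, where a_{n-m} is the (n-m)-dimensional abelian algebra. -/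
/-!
Rescale the basis vectors outside the ideal by `t ≠ 0`. The structure constant `λᵢⱼᵏ` becomes
`t ^ (qᵢ + qⱼ - qₖ) • λᵢⱼᵏ`, where `q` is the indicator of the indices `≥ m`; since `g₁` is an ideal,
`λᵢⱼᵏ ≠ 0` forces `qₖ ≤ qᵢ, qⱼ`, so this is a polynomial curve in the orbit whose value at `t = 0`
keeps exactly the constants with all indices `< m`. Over an infinite field a polynomial vanishing
on the punctured curve also vanishes at `t = 0`.
-/

open scoped BigOperators

open Polynomial

section DiagonalAction

variable {F : Type*} [Field F] {n : ℕ}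

def diagonalGL (d : Fin n → Fˣ) : GL (Fin n) F where
  val := Matrix.diagonal fun i => d i
  inv := Matrix.diagonal fun i => (d i : F)⁻¹
  val_inv := by simp [Matrix.diagonal_mul_diagonal]
  inv_val := by simp [Matrix.diagonal_mul_diagonal]

lemma coe_diagonalGL (d : Fin n → Fˣ) :
    (diagonalGL d : Matrix (Fin n) (Fin n) F) = Matrix.diagonal fun i => (d i : F) :=
  rfl

lemma coe_diagonalGL_inv (d : Fin n → Fˣ) :
    (((diagonalGL d)⁻¹ : GL (Fin n) F) : Matrix (Fin n) (Fin n) F) =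
      Matrix.diagonal fun i => (d i : F)⁻¹ :=
  rfl

lemma actSV_diagonalGL (d : Fin n → Fˣ) (lam : Fin n → Fin n → Fin n → F) (a b c : Fin n) :
    actSV (diagonalGL d) lam a b c = d a * d b * (d c : F)⁻¹ * lam a b c := by
  simp only [actSV, coe_diagonalGL, coe_diagonalGL_inv]
  simp [Matrix.diagonal_apply, ite_mul]

end DiagonalAction

lemma eval_zero_mem_zClosure {F : Type*} [Field F] [Infinite F] {n : ℕ}
    {S : Set (Fin n → Fin n → Fin n → F)} (γ : Fin n → Fin n → Fin n → F[X])
    (hγ : ∀ t : F, t ≠ 0 → (fun a b c => (γ a b c).eval t) ∈ S) :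
    (fun a b c => (γ a b c).eval 0) ∈ zClosure S := by
  intro p hp
  set P : F[X] := MvPolynomial.aeval (fun v => γ v.1 v.2.1 v.2.2) p
  have hP : ∀ t, P.eval t = MvPolynomial.eval (fun v => (γ v.1 v.2.1 v.2.2).eval t) p := by
    intro t
    rw [← coe_aeval_eq_eval, ← AlgHom.comp_apply, MvPolynomial.comp_aeval,
      MvPolynomial.aeval_def, Algebra.algebraMap_self]
    rfl
  have hP0 : P = 0 := by
    refine eq_zero_of_infinite_isRoot P ((Set.finite_singleton 0).infinite_compl.mono ?_)
    intro t (ht : t ≠ 0)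
    exact (hP t).trans (hp (fun a b c => (γ a b c).eval t) (hγ t ht))
  simpa [hP0] using (hP 0).symm

lemma mem_zClosure_orbitSV_of_weights {F : Type*} [Field F] [Infinite F] {n : ℕ}
    (lam : Fin n → Fin n → Fin n → F) (q : Fin n → ℕ)
    (hq : ∀ a b c, lam a b c ≠ 0 → q c ≤ q a + q b) :
    (fun a b c => if q a + q b = q c then lam a b c else 0) ∈ zClosure (orbitSV lam) := by
  have hlim := eval_zero_mem_zClosure (S := orbitSV lam)
    (fun a b c => C (lam a b c) * X ^ (q a + q b - q c)) fun t ht => by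
      refine ⟨diagonalGL fun i => Units.mk0 t ht ^ q i, ?_⟩
      ext a b c
      rw [actSV_diagonalGL]
      by_cases h : lam a b c = 0
      · simp [h]
      · simp only [eval_mul, eval_C, eval_pow, eval_X, Units.val_pow_eq_pow_val, Units.val_mk0,
          pow_sub₀ _ ht (hq a b c h), pow_add]
        ring
  convert hlim using 4 with a b c
  by_cases h : lam a b c = 0
  · simp [h]
  · have := hq a b c h
    simp only [eval_mul, eval_C, eval_pow, eval_X, zero_pow_eq, mul_ite, mul_one, mul_zero]
    grind

lemma exists_basis_fin_adapted {F V : Type*} [Field F] [AddCommGroup V] [Module F V]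
    [FiniteDimensional F V] {n m : ℕ} (hV : Module.finrank F V = n)
    (J : Submodule F V) (hJ : Module.finrank F J = m) :
    ∃ b : Module.Basis (Fin n) F V, (∀ i : Fin n, (i : ℕ) < m → b i ∈ J) ∧
      ∀ x ∈ J, ∀ k : Fin n, m ≤ (k : ℕ) → b.repr x k = 0 := by
  obtain ⟨W, hW⟩ := J.exists_isCompl
  have hmn : m ≤ n := hJ ▸ hV ▸ J.finrank_le
  have hW' : Module.finrank F W = n - m := by
    have := Submodule.finrank_add_eq_of_isCompl hW
    omega
  let b₀ := ((Module.finBasisOfFinrankEq F J hJ).prod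
    (Module.finBasisOfFinrankEq F W hW')).map (J.prodEquivOfIsCompl W hW)
  let e : Fin m ⊕ Fin (n - m) ≃ Fin n := finSumFinEquiv.trans (finCongr (by omega))
  refine ⟨b₀.reindex e, fun i hi => ?_, fun x hx k hk => ?_⟩
  · have hi' : e.symm i = Sum.inl ⟨i, hi⟩ := e.symm_apply_eq.mpr (Fin.ext (by simp [e]))
    simp [b₀, hi']
  · have hk' : e.symm k = Sum.inr ⟨k - m, by omega⟩ :=
      e.symm_apply_eq.mpr (Fin.ext (by simp [e]; omega))
    simp [b₀, hk', Submodule.prodEquivOfIsCompl_symm_apply_left J W hW ⟨x, hx⟩]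

/-- `mu` is the structure vector of `g₁ ⊕ a_{n-m}` in the basis `b`. -/
theorem degeneration_to_ideal_sum_general {F V : Type*} [Field F] [Infinite F]
    [AddCommGroup V] [Module F V] [FiniteDimensional F V]
    {n m : ℕ} (hV : Module.finrank F V = n)
    (B : V →ₗ[F] V →ₗ[F] V)
    (J : Submodule F V) (hJ : Module.finrank F J = m)
    (hideal : ∀ x ∈ J, ∀ a : V, B x a ∈ J ∧ B a x ∈ J) :
    ∃ (b : Module.Basis (Fin n) F V) (lam mu : Fin n → Fin n → Fin n → F),
      (∀ i j, B (b i) (b j) = ∑ k, lam i j k • b k) ∧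
      (∀ i : Fin n, (i : ℕ) < m → b i ∈ J) ∧
      (∀ i j k : Fin n,
        mu i j k = if (i : ℕ) < m ∧ (j : ℕ) < m ∧ (k : ℕ) < m then lam i j k else 0) ∧
      mu ∈ zClosure (orbitSV lam) := by
  obtain ⟨b, hbJ, hreprJ⟩ := exists_basis_fin_adapted hV J hJ
  set lam : Fin n → Fin n → Fin n → F := fun i j k => b.repr (B (b i) (b j)) k
  have hlam : ∀ i j k : Fin n, lam i j k ≠ 0 → m ≤ (k : ℕ) → m ≤ (i : ℕ) ∧ m ≤ (j : ℕ) := by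
    intro i j k hijk hk
    by_contra! hij
    refine hijk (hreprJ _ ?_ k hk)
    by_cases hi : (i : ℕ) < m
    · exact (hideal _ (hbJ i hi) _).1
    · exact (hideal _ (hbJ j (hij (not_lt.mp hi))) _).2
  refine ⟨b, lam, _, fun i j => (b.sum_repr _).symm, hbJ, fun _ _ _ => rfl, ?_⟩
  let q : Fin n → ℕ := fun i => if (i : ℕ) < m then 0 else 1
  convert mem_zClosure_orbitSV_of_weights lam q (fun i j k h => ?_) using 4 with i j k
  · by_cases h : lam i j k = 0
    · simp [h]
    · have := hlam i j k h
      simp only [q]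
      grind
  · have := hlam i j k h
    simp only [q]
    split_ifs <;> omega

/-- if an `n`-dimensional algebra `g` has an `m`-dimensional ideal `g₁`
(`1 ≤ m < n`), then `g` degenerates to `g₁ ⊕ a_{n-m}`: there is a basis adapted to the
ideal whose structure vector `λ` has, in its orbit closure, the structure vector `μ`
obtained from `λ` by keeping only the entries with all three indices `< m` (which is a
structure vector of the algebra direct sum `g₁ ⊕ a_{n-m}`). -/
theorem degeneration_to_ideal_sum {F V : Type*} [Field F] [Infinite F]
    [AddCommGroup V] [Module F V] [FiniteDimensional F V]
    {n m : ℕ} (hm : 1 ≤ m) (hmn : m < n) (hV : Module.finrank F V = n)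
    (B : V →ₗ[F] V →ₗ[F] V)
    (J : Submodule F V) (hJ : Module.finrank F J = m)
    (hideal : ∀ x ∈ J, ∀ a : V, B x a ∈ J ∧ B a x ∈ J) :
    ∃ (b : Module.Basis (Fin n) F V) (lam mu : Fin n → Fin n → Fin n → F),
      (∀ i j, B (b i) (b j) = ∑ k, lam i j k • b k) ∧
      (∀ i : Fin n, (i : ℕ) < m → b i ∈ J) ∧
      (∀ i j k : Fin n,
        mu i j k = if (i : ℕ) < m ∧ (j : ℕ) < m ∧ (k : ℕ) < m then lam i j k else 0) ∧
      mu ∈ zClosure (orbitSV lam) :=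
  degeneration_to_ideal_sum_general hV B J hJ hideal
end

section
/- Let F be a field, n ≥ 3, and let g = (V,[,]) be an n-dimensional algebra with [x,x] = 0 for all x, and suppose [x,y] ∈ span_F(x,y) for all x,y ∈ V. If x,y,z are distinct elements of a basis of V and the structure vector λ (relative to that basis) is written [e_i,e_j] = λ_{iji} e_i + λ_{ijj} e_j, then λ_{iji} = λ_{kjk} whenever j ∉ {i,k}. Consequently λ lies in the subspace P = {λ ∈ Sk_n(F) : λ_{ijk} = 0 whenever k ∉ {i,j}, and λ_{iji} = λ_{kjk} whenever j ∉ {i,k}}. -/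
/-
Test condition (*) on basis vectors. Since `[e_i, e_j]` lies in `span(e_i, e_j)`, its
coordinates outside `{i, j}` vanish. Expanding `[e_i + e_k, e_j] = [e_i, e_j] + [e_k, e_j]`
for `j ∉ {i, k}`, its `i`- and `k`-coordinates are `λ_{iji}` and `λ_{kjk}`; a vector of
`span(e_i + e_k, e_j)` has equal `i`- and `k`-coordinates.
-/

section Coordinates

variable {ι R : Type*} [DecidableEq ι] [Semiring R]

theorem apply_eq_zero_of_mem_span_pair_single {a b k : ι} {v : ι → R}
    (hv : v ∈ Submodule.span R ({Pi.single a 1, Pi.single b 1} : Set (ι → R)))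
    (hka : k ≠ a) (hkb : k ≠ b) : v k = 0 := by
  obtain ⟨c, d, rfl⟩ := Submodule.mem_span_pair.mp hv
  simp [hka, hkb]

theorem apply_eq_apply_of_mem_span_pair_single_add_single {i j k : ι} {v : ι → R}
    (hv : v ∈ Submodule.span R ({Pi.single i 1 + Pi.single k 1, Pi.single j 1} : Set (ι → R)))
    (hji : j ≠ i) (hjk : j ≠ k) : v i = v k := by
  obtain ⟨c, d, rfl⟩ := Submodule.mem_span_pair.mp hv
  by_cases hik : i = k
  · rw [hik]
  · simp [hik, Ne.symm hik, Ne.symm hji, Ne.symm hjk]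

end Coordinates

section StructureVector

variable {ι R : Type*} [Fintype ι] [CommSemiring R]

/-- The product `[x, y]` of the algebra with structure vector `lam`:
`[e_i, e_j] = ∑ k, lam i j k • e_k`. -/
def structureBracket (lam : ι → ι → ι → R) (x y : ι → R) : ι → R :=
  fun k => ∑ i, ∑ j, lam i j k * x i * y j

variable (lam : ι → ι → ι → R)

theorem structureBracket_single_single [DecidableEq ι] (a b : ι) :
    structureBracket lam (Pi.single a 1) (Pi.single b 1) = fun k => lam a b k := by
  funext k
  simp [structureBracket, Pi.single_apply]

theorem structureBracket_add_left (x x' y : ι → R) :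
    structureBracket lam (x + x') y = structureBracket lam x y + structureBracket lam x' y := by
  funext k
  simp only [structureBracket, Pi.add_apply, mul_add, add_mul, Finset.sum_add_distrib]

end StructureVector

theorem condition_star_structure_general {F : Type*} [Field F] {n : ℕ}
    (lam : Fin n → Fin n → Fin n → F)
    (hstar : ∀ x y : Fin n → F,
      (fun k => ∑ i, ∑ j, lam i j k * x i * y j) ∈
        Submodule.span F ({x, y} : Set (Fin n → F))) :
    (∀ i j k : Fin n, k ≠ i → k ≠ j → lam i j k = 0) ∧
      (∀ i j k : Fin n, j ≠ i → j ≠ k → lam i j i = lam k j k) := by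
  have hspan : ∀ x y, structureBracket lam x y ∈ Submodule.span F {x, y} := hstar
  have hoff : ∀ i j k : Fin n, k ≠ i → k ≠ j → lam i j k = 0 := by
    intro i j k hki hkj
    have h := hspan (Pi.single i 1) (Pi.single j 1)
    rw [structureBracket_single_single] at h
    exact apply_eq_zero_of_mem_span_pair_single h hki hkj
  refine ⟨hoff, fun i j k hji hjk => ?_⟩
  by_cases hik : i = k
  · rw [hik]
  have h := hspan (Pi.single i 1 + Pi.single k 1) (Pi.single j 1)
  have hcoord := apply_eq_apply_of_mem_span_pair_single_add_single h hji hjk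
  simp only [structureBracket_add_left, structureBracket_single_single, Pi.add_apply] at hcoord
  rwa [hoff k j i hik (Ne.symm hji), hoff i j k (Ne.symm hik) (Ne.symm hjk), add_zero,
    zero_add] at hcoord

/-- if the algebra with structure vector `λ` (w.r.t. the standard basis of
`Fⁿ`, `n ≥ 3`) satisfies `[x,x] = 0` and `[x,y] ∈ span{x,y}` for all `x,y`, then
`λ_{ijk} = 0` whenever `k ∉ {i,j}` and `λ_{iji} = λ_{kjk}` whenever `j ∉ {i,k}`; i.e.
`λ` lies in the subspace `P`. -/
theorem condition_star_structure {F : Type*} [Field F] {n : ℕ} (hn : 3 ≤ n)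
    (lam : Fin n → Fin n → Fin n → F)
    (hskew : ∀ x : Fin n → F,
      (fun k => ∑ i, ∑ j, lam i j k * x i * x j) = (0 : Fin n → F))
    (hstar : ∀ x y : Fin n → F,
      (fun k => ∑ i, ∑ j, lam i j k * x i * y j) ∈
        Submodule.span F ({x, y} : Set (Fin n → F))) :
    (∀ i j k : Fin n, k ≠ i → k ≠ j → lam i j k = 0) ∧
      (∀ i j k : Fin n, j ≠ i → j ≠ k → lam i j i = lam k j k) :=
  condition_star_structure_general lam hstar
end

section
/- Let F be a field and n ≥ 3. The subspace P = {λ ∈ Sk_n(F) : λ_{ijk} = 0 whenever k ∉ {i,j}, and λ_{iji} = λ_{kjk} whenever j ∉ {i,k}} of F^(n³) has dimension n over F. -/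
/-!
Every `λ ∈ P` is determined by the weights `c_j := λ_{iji}`, which by `λ_{iji} = λ_{kjk}` do not
depend on the choice of `i ≠ j`: skew-symmetry gives `λ_{ijj} = -c_i`, and all other entries
vanish. Conversely, every `c ∈ F^n` arises from `λ_{ijk} = δ_{ki} c_j - δ_{kj} c_i`, so
`c ↦ λ` is a linear isomorphism `F^n ≃ P`.
-/

namespace SkewStructure

variable {R ι : Type*}

def IsPVector [Zero R] [Add R] (lam : ι → ι → ι → R) : Prop :=
  (∀ i k, lam i i k = 0) ∧ (∀ i j k, lam i j k + lam j i k = 0) ∧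
    (∀ i j k, k ≠ i → k ≠ j → lam i j k = 0) ∧
    (∀ i j k, j ≠ i → j ≠ k → lam i j i = lam k j k)

section Ring

variable [Ring R] [DecidableEq ι]

def pVector (c : ι → R) : ι → ι → ι → R :=
  fun i j k => (if k = i then c j else 0) - (if k = j then c i else 0)

variable (R ι) in
def pVectorₗ : (ι → R) →ₗ[R] (ι → ι → ι → R) where
  toFun := pVector
  map_add' c d := by
    funext i j k
    simp only [pVector, Pi.add_apply]
    split_ifs <;> abel
  map_smul' a c := by
    funext i j k
    simp only [pVector, Pi.smul_apply, smul_eq_mul, RingHom.id_apply]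
    split_ifs <;> simp [mul_sub]

theorem pVector_apply_left_of_ne (c : ι → R) {i j : ι} (h : i ≠ j) : pVector c i j i = c j := by
  simp [pVector, h]

theorem isPVector_pVector (c : ι → R) : IsPVector (pVector c) := by
  refine ⟨fun i k => by simp [pVector], fun i j k => ?_, fun i j k hki hkj => ?_,
    fun i j k hji hjk => ?_⟩
  · simp only [pVector]
    abel
  · simp [pVector, hki, hkj]
  · rw [pVector_apply_left_of_ne c hji.symm, pVector_apply_left_of_ne c hjk.symm]

end Ring

theorem IsPVector.ext [AddGroup R] {lam mu : ι → ι → ι → R} (hlam : IsPVector lam)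
    (hmu : IsPVector mu) (h : ∀ i j, i ≠ j → lam i j i = mu i j i) : lam = mu := by
  obtain ⟨hlam_diag, hlam_skew, hlam_zero, -⟩ := hlam
  obtain ⟨hmu_diag, hmu_skew, hmu_zero, -⟩ := hmu
  funext i j k
  obtain rfl | hij := eq_or_ne i j
  · rw [hlam_diag, hmu_diag]
  obtain rfl | hki := eq_or_ne k i
  · exact h k j hij
  obtain rfl | hkj := eq_or_ne k j
  · rw [eq_neg_of_add_eq_zero_left (hlam_skew i k k), eq_neg_of_add_eq_zero_left (hmu_skew i k k),
      h k i hij.symm]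
  · rw [hlam_zero i j k hki hkj, hmu_zero i j k hki hkj]

variable [Ring R] [DecidableEq ι] [Nontrivial ι]

theorem IsPVector.eq_pVector {lam : ι → ι → ι → R} (hlam : IsPVector lam) :
    lam = pVector fun j => lam (exists_ne j).choose j (exists_ne j).choose := by
  refine hlam.ext (isPVector_pVector _) fun i j hij => ?_
  rw [pVector_apply_left_of_ne _ hij]
  exact hlam.2.2.2 i j _ hij.symm (exists_ne j).choose_spec.symm

theorem pVectorₗ_injective : Function.Injective (pVectorₗ R ι) := by
  intro c d hcd
  funext j
  obtain ⟨i, hij⟩ := exists_ne j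
  have := congr_fun₃ hcd i j i
  rwa [pVectorₗ, LinearMap.coe_mk, AddHom.coe_mk, pVector_apply_left_of_ne c hij,
    pVector_apply_left_of_ne d hij] at this

theorem coe_range_pVectorₗ :
    (LinearMap.range (pVectorₗ R ι) : Set (ι → ι → ι → R)) = {lam | IsPVector lam} := by
  ext lam
  constructor
  · rintro ⟨c, rfl⟩
    exact isPVector_pVector c
  · intro hlam
    exact ⟨_, hlam.eq_pVector.symm⟩

theorem finrank_range_pVectorₗ [StrongRankCondition R] [Fintype ι] :
    Module.finrank R (LinearMap.range (pVectorₗ R ι)) = Fintype.card ι := by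
  rw [LinearMap.finrank_range_of_inj pVectorₗ_injective, Module.finrank_fintype_fun_eq_card]

end SkewStructure

/-- the set `P` of skew structure vectors with `λ_{ijk} = 0` for
`k ∉ {i,j}` and `λ_{iji} = λ_{kjk}` for `j ∉ {i,k}` is an `F`-subspace of `F^(n³)` of
dimension `n` (for `n ≥ 3`). -/
theorem dim_P_eq_n {F : Type*} [Field F] (n : ℕ) (hn : 3 ≤ n) :
    ∃ W : Submodule F (Fin n → Fin n → Fin n → F),
      (W : Set (Fin n → Fin n → Fin n → F)) =
        {lam | (∀ i k, lam i i k = 0) ∧ (∀ i j k, lam i j k + lam j i k = 0) ∧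
          (∀ i j k : Fin n, k ≠ i → k ≠ j → lam i j k = 0) ∧
          (∀ i j k : Fin n, j ≠ i → j ≠ k → lam i j i = lam k j k)} ∧
      Module.finrank F W = n := by
  have : Nontrivial (Fin n) := Fin.nontrivial_iff_two_le.mpr (by omega)
  exact ⟨LinearMap.range (SkewStructure.pVectorₗ F (Fin n)), SkewStructure.coe_range_pVectorₗ,
    by rw [SkewStructure.finrank_range_pVectorₗ, Fintype.card_fin]⟩
end

section
/- Let F be a field, n ≥ 3, and let g = (V,[,]) be an n-dimensional algebra satisfying [x,x] = 0 for all x, the metabelian identity [[x,y],z] = 0 for all x,y,z, and dim_F ann(g) = n-2, where ann(g) is the two-sided annihilator. Then g is isomorphic to h_n, the direct sum of the 3-dimensional Heisenberg Lie algebra with the (n-3)-dimensional abelian Lie algebra. -/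
/-! For alternating `B` the two-sided annihilator is `ker B`, and the metabelian identity puts
every product `B x y` into it. If `x, y` span a complement of `ker B`, then `z = B x y ≠ 0`, since
otherwise `x` and `y` would annihilate all of `V = span {x, y} ⊔ ker B`. Completing `z` to a basis
of `ker B` and putting `x, y` in front gives the basis of `h_n`. -/

open Module Submodule

namespace Submodule

variable {K V : Type*} [DivisionRing K] [AddCommGroup V] [Module K V]

theorem exists_fin_span_range_eq (P : Submodule K V) [FiniteDimensional K P] {k : ℕ}
    (hP : finrank K P = k) : ∃ c : Fin k → V, span K (Set.range c) = P := by
  let c := finBasisOfFinrankEq K P hP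
  refine ⟨P.subtype ∘ c, ?_⟩
  rw [Set.range_comp, span_image, c.span_eq, map_subtype_top]

theorem exists_fin_cons_span_range_eq (P : Submodule K V) [FiniteDimensional K P]
    {k : ℕ} (hP : finrank K P = k + 1) {z : V} (hzP : z ∈ P) (hz : z ≠ 0) :
    ∃ c : Fin k → V, span K (Set.range (Fin.cons z c : Fin (k + 1) → V)) = P := by
  obtain ⟨C, hdisj, hsup⟩ :=
    IsModularLattice.exists_disjoint_and_sup_eq ((span_singleton_le_iff_mem z P).2 hzP)
  have hCP : C ≤ P := hsup ▸ le_sup_right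
  have : FiniteDimensional K C := finiteDimensional_of_le hCP
  have hC : finrank K C = k := by
    have := finrank_sup_add_finrank_inf_eq (K ∙ z) C
    rw [hsup, hdisj.eq_bot, finrank_bot, finrank_span_singleton hz, hP] at this
    omega
  obtain ⟨c, hc⟩ := C.exists_fin_span_range_eq hC
  exact ⟨c, by rw [Fin.range_cons, span_insert, hc, hsup]⟩

end Submodule

namespace LinearMap.IsAlt

variable {F V : Type*} [Field F] [AddCommGroup V] [Module F V] {B : V →ₗ[F] V →ₗ[F] V}

theorem setOf_forall_eq_zero_eq_ker (hB : B.IsAlt) :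
    {c | ∀ a, B c a = 0 ∧ B a c = 0} = (ker B : Set V) := by
  ext c
  simp only [Set.mem_ofPred_eq, SetLike.mem_coe, mem_ker, LinearMap.ext_iff, zero_apply]
  exact forall_congr' fun a => and_iff_left_of_imp fun h => by rw [← hB.neg, h, neg_zero]

theorem mem_ker_of_forall_apply_eq_zero (hB : B.IsAlt) {s : Set V} (hs : span F s ⊔ ker B = ⊤)
    {x : V} (hx : ∀ y ∈ s, B x y = 0) : x ∈ ker B := by
  rw [mem_ker, ← ker_eq_top, eq_top_iff, ← hs, sup_le_iff]
  refine ⟨span_le.2 hx, fun k hk => ?_⟩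
  rw [mem_ker, ← hB.neg, mem_ker.1 hk, zero_apply, neg_zero]

theorem ker_eq_top_of_apply_eq_zero (hB : B.IsAlt) {u : Fin 2 → V}
    (hu : span F (Set.range u) ⊔ ker B = ⊤) (h : B (u 0) (u 1) = 0) : ker B = ⊤ := by
  have hker : ∀ i, u i ∈ ker B := fun i => hB.mem_ker_of_forall_apply_eq_zero hu <| by
    rintro _ ⟨j, rfl⟩
    fin_cases i <;> fin_cases j
    exacts [hB _, h, by rw [← hB.neg]; simp [h], hB _]
  rw [eq_top_iff, ← hu]
  exact sup_le (span_le.2 (Set.range_subset_iff.2 hker)) le_rfl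

theorem apply_eq_heisenberg (hB : B.IsAlt) {n : ℕ} (hn : 3 ≤ n) {b : Fin n → V}
    (h01 : B (b ⟨0, by omega⟩) (b ⟨1, by omega⟩) = b ⟨2, by omega⟩)
    (hker : ∀ i : Fin n, 2 ≤ (i : ℕ) → b i ∈ ker B) (i j : Fin n) :
    B (b i) (b j) =
      if i = (⟨0, by omega⟩ : Fin n) ∧ j = (⟨1, by omega⟩ : Fin n) then
        b (⟨2, by omega⟩ : Fin n)
      else if i = (⟨1, by omega⟩ : Fin n) ∧ j = (⟨0, by omega⟩ : Fin n) then
        -b (⟨2, by omega⟩ : Fin n)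
      else 0 := by
  have hann : ∀ k (hk : k + 2 < n) v, B (b ⟨k + 2, hk⟩) v = 0 ∧ B v (b ⟨k + 2, hk⟩) = 0 :=
    fun k hk v => by
      have hk0 := mem_ker.1 (hker ⟨k + 2, hk⟩ (by simp))
      exact ⟨by simp [hk0], by rw [← hB.neg, hk0, zero_apply, neg_zero]⟩
  have h10 : B (b ⟨1, by omega⟩) (b ⟨0, by omega⟩) = -b ⟨2, by omega⟩ := by rw [← hB.neg, h01]
  obtain ⟨_ | _ | i, hi⟩ := i <;> obtain ⟨_ | _ | j, hj⟩ := j <;> simp [hB _, h01, h10, hann]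

end LinearMap.IsAlt

/-- an `n`-dimensional algebra (`n ≥ 3`) with `[x,x] = 0`, satisfying the
metabelian identity `[[x,y],z] = 0` (and `[z,[x,y]] = 0`), whose two-sided annihilator
has dimension `n-2`, is isomorphic to `h_n`: it admits a basis whose only nonzero
products are `[b₀,b₁] = b₂ = -[b₁,b₀]`. -/
theorem metabelian_skew_iso_heisenberg {F V : Type*} [Field F] [AddCommGroup V]
    [Module F V] [FiniteDimensional F V] {n : ℕ} (hn : 3 ≤ n)
    (hV : Module.finrank F V = n)
    (B : V →ₗ[F] V →ₗ[F] V)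
    (hskew : ∀ x : V, B x x = 0)
    (hmeta : ∀ x y z : V, B (B x y) z = 0)
    (W : Submodule F V)
    (hW : (W : Set V) = {c | ∀ a : V, B c a = 0 ∧ B a c = 0})
    (hdim : Module.finrank F W = n - 2) :
    ∃ b : Module.Basis (Fin n) F V, ∀ i j : Fin n,
      B (b i) (b j) =
        if i = (⟨0, by omega⟩ : Fin n) ∧ j = (⟨1, by omega⟩ : Fin n) then
          b (⟨2, by omega⟩ : Fin n)
        else if i = (⟨1, by omega⟩ : Fin n) ∧ j = (⟨0, by omega⟩ : Fin n) then
          -b (⟨2, by omega⟩ : Fin n)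
        else 0 := by
  have hB : B.IsAlt := hskew
  obtain rfl : W = LinearMap.ker B :=
    SetLike.coe_injective (hW.trans hB.setOf_forall_eq_zero_eq_ker)
  obtain ⟨m, rfl⟩ := Nat.exists_eq_add_of_le' hn
  obtain ⟨W', hcompl⟩ := (LinearMap.ker B).exists_isCompl
  obtain ⟨u, hu⟩ := W'.exists_fin_span_range_eq (k := 2) <| by
    have := Submodule.finrank_add_eq_of_isCompl hcompl
    omega
  have hsup : span F (Set.range u) ⊔ LinearMap.ker B = ⊤ := by rw [hu, sup_comm, hcompl.sup_eq_top]
  set z := B (u 0) (u 1)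
  have hz : z ≠ 0 := fun hz0 => by
    rw [hB.ker_eq_top_of_apply_eq_zero hsup hz0, finrank_top] at hdim
    omega
  obtain ⟨c, hc⟩ := (LinearMap.ker B).exists_fin_cons_span_range_eq (k := m) (by omega)
    (LinearMap.mem_ker.2 (LinearMap.ext (hmeta _ _))) hz
  let b : Fin (m + 3) → V := Fin.cons (u 0) (Fin.cons (u 1) (Fin.cons z c))
  have hspan : ⊤ ≤ span F (Set.range b) := by
    rw [← hsup, ← hc]
    refine sup_le (span_mono ?_) (span_mono ?_)
    · rintro _ ⟨i, rfl⟩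
      fin_cases i
      exacts [⟨0, rfl⟩, ⟨1, rfl⟩]
    · rintro _ ⟨i, rfl⟩
      exact ⟨i.succ.succ, rfl⟩
  refine ⟨basisOfTopLeSpanOfCardEqFinrank b hspan (by simp [hV]), ?_⟩
  rw [coe_basisOfTopLeSpanOfCardEqFinrank]
  refine hB.apply_eq_heisenberg hn rfl fun ⟨i, hi⟩ hi2 => ?_
  obtain ⟨k, rfl⟩ := Nat.exists_eq_add_of_le' hi2
  exact hc ▸ subset_span ⟨⟨k, by omega⟩, rfl⟩
end

section
/- Let F be an infinite field and n ≥ 2. Let δ_n ∈ F^(n³) be the structure vector whose only nonzero entry is δ_{112} = 1 (the commutative algebra d_n with [v_1,v_1] = v_2 and all other basis products zero). Then the Zariski closure of the GL(n,F)-orbit of δ_n equals O(δ_n) ∪ {0}; i.e., the only proper degeneration of d_n is to the abelian algebra. -/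
open scoped BigOperators

/-!
Write `u ⊗ u ⊗ w` for the structure vector `(a, b, c) ↦ u a * u b * w c`, so that
`δ_n = e₀ ⊗ e₀ ⊗ e₁`. Changing the basis by `g` sends `u ⊗ u ⊗ w` to
`(u ᵥ* g) ⊗ (u ᵥ* g) ⊗ (g⁻¹ *ᵥ w)`, which preserves `u ⬝ᵥ w`, and `GL(n,F)` is transitive on pairs
of nonzero vectors `(u, w)` with `u ⬝ᵥ w = 0`; hence the orbit of `δ_n` consists of exactly these
tensors. They satisfy the polynomial identities
`μ(a,b,c) μ(a₀,b₀,c₀)² = μ(a,b₀,c₀) μ(b,b₀,c₀) μ(a₀,a₀,c)` and `∑ₖ μ(k,b,c) μ(a,a',k) = 0`,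
which therefore hold on the closure, and dividing by a nonzero entry shows that every nonzero `μ`
satisfying them is such a tensor. Finally `0` lies in the closure: `t • δ_n` is in the orbit for
all `t ≠ 0`, and a polynomial in `t` with infinitely many roots vanishes at `0`.
-/

open Matrix MvPolynomial

theorem MvPolynomial.eval_zero_eq_zero_of_eval_smul_eq_zero {R σ : Type*} [CommRing R] [IsDomain R]
    [Infinite R] (p : MvPolynomial σ R) (x : σ → R) (h : ∀ t : R, t ≠ 0 → eval (t • x) p = 0) :
    eval 0 p = 0 := by
  set q : Polynomial R := aeval (fun s => Polynomial.C (x s) * Polynomial.X) p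
  have hq : ∀ t, q.eval t = eval (t • x) p := by
    intro t
    have hx : (fun s => Polynomial.aeval t (Polynomial.C (x s) * Polynomial.X)) = t • x := by
      funext s; simp only [map_mul, Polynomial.aeval_C, Polynomial.aeval_X, Algebra.algebraMap_self,
        RingHom.id_apply, Pi.smul_apply, smul_eq_mul, mul_comm]
    rw [← Polynomial.coe_aeval_eq_eval, ← AlgHom.comp_apply, comp_aeval, hx]; rfl
  have hq0 : q = 0 := Polynomial.eq_zero_of_infinite_isRoot q <|
    (Set.finite_singleton 0).infinite_compl.mono fun t ht => by simpa [hq] using h t ht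
  simpa [hq0] using (hq 0).symm

namespace Matrix

variable {ι R F : Type*} [Fintype ι] [DecidableEq ι] [CommRing R] [Field F]

theorem det_one_updateCol (i : ι) (v : ι → R) : ((1 : Matrix ι ι R).updateCol i v).det = v i := by
  rw [← cramer_apply, cramer_one]; rfl

theorem det_one_updateRow (i : ι) (v : ι → R) : ((1 : Matrix ι ι R).updateRow i v).det = v i := by
  rw [← det_transpose, ← updateCol_transpose, transpose_one, det_one_updateCol]

theorem exists_mul_eq_one_row_eq_col_eq_of_apply_ne_zero {i₀ i₁ : ι} (hi : i₀ ≠ i₁) {u w : ι → F}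
    (hu : u i₀ ≠ 0) (hw : w i₁ ≠ 0) (huw : u ⬝ᵥ w = 0) :
    ∃ g h : Matrix ι ι F, g * h = 1 ∧ g.row i₀ = u ∧ h.col i₁ = w := by
  -- `g = D⁻¹ * A`: `A` has row `i₀` equal to `u`, and `D` sends `Pi.single i₁ 1` to `A *ᵥ w`
  -- while keeping row `i₀` of the identity.
  set A := (1 : Matrix ι ι F).updateRow i₀ u
  set D := (1 : Matrix ι ι F).updateCol i₁ (Function.update w i₀ 0)
  have hA : IsUnit A.det := by rw [det_one_updateRow]; exact hu.isUnit
  have hD : IsUnit D.det := by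
    rw [det_one_updateCol, Function.update_of_ne hi.symm]; exact hw.isUnit
  have hAw : A *ᵥ w = D.col i₁ := by
    ext i; simp [A, D, updateRow_mulVec, huw]
  have hD_row : Pi.single i₀ 1 ᵥ* D = Pi.single i₀ 1 := by
    simp [D, vecMul_updateCol, Function.update_eq_self_iff, hi.symm]
  refine ⟨D⁻¹ * A, A⁻¹ * D, ?_, ?_, ?_⟩
  · rw [mul_assoc, ← mul_assoc A, mul_nonsing_inv _ hA, one_mul, nonsing_inv_mul _ hD]
  · have : Pi.single i₀ 1 ᵥ* D⁻¹ = Pi.single i₀ 1 := by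
      conv_lhs => rw [← hD_row, vecMul_vecMul, mul_nonsing_inv _ hD, vecMul_one]
    rw [← single_one_vecMul, ← vecMul_vecMul, this, single_one_vecMul]
    ext j; simp [A]
  · rw [← mulVec_single_one, ← mulVec_mulVec, mulVec_single_one, ← hAw, mulVec_mulVec,
      nonsing_inv_mul _ hA, one_mulVec]

theorem exists_ne_apply_ne_zero_of_dotProduct_eq_zero {u w : ι → F} (hu : u ≠ 0) (hw : w ≠ 0)
    (huw : u ⬝ᵥ w = 0) : ∃ q r, q ≠ r ∧ u q ≠ 0 ∧ w r ≠ 0 := by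
  obtain ⟨q, hq⟩ := Function.ne_iff.mp hu
  by_contra! h
  have hw_single : w = Pi.single q (w q) := by
    ext r
    by_cases hr : r = q
    · subst hr; simp
    · simp [hr, h q r (Ne.symm hr) hq]
  rw [hw_single, dotProduct_single, mul_eq_zero] at huw
  exact hw (hw_single.trans (by simp [huw.resolve_left hq]))

theorem exists_mul_eq_one_row_eq_col_eq {i₀ i₁ : ι} (hi : i₀ ≠ i₁) {u w : ι → F}
    (hu : u ≠ 0) (hw : w ≠ 0) (huw : u ⬝ᵥ w = 0) :
    ∃ g h : Matrix ι ι F, g * h = 1 ∧ g.row i₀ = u ∧ h.col i₁ = w := by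
  obtain ⟨q, r, hqr, hq, hr⟩ := exists_ne_apply_ne_zero_of_dotProduct_eq_zero hu hw huw
  obtain ⟨σ, hσ⟩ := Equiv.Perm.exists_extending_pair ![i₀, i₁] ![q, r]
    (by simpa [Function.Injective, Fin.forall_fin_two] using ⟨hi, hi.symm⟩)
    (by simpa [Function.Injective, Fin.forall_fin_two] using ⟨hqr, hqr.symm⟩)
  have hσ₀ : σ i₀ = q := hσ 0
  have hσ₁ : σ i₁ = r := hσ 1
  obtain ⟨g, h, hgh, hg, hh⟩ := exists_mul_eq_one_row_eq_col_eq_of_apply_ne_zero hi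
    (u := u ∘ σ) (w := w ∘ σ) (by simpa [hσ₀]) (by simpa [hσ₁])
    (by rw [← huw, ← dotProduct_comp_equiv_symm]; simp [Function.comp_def])
  refine ⟨g.submatrix id σ.symm, h.submatrix σ.symm id, ?_, ?_, ?_⟩
  · rw [submatrix_mul_equiv, hgh, submatrix_id_id]
  · ext j; simpa using congrFun hg (σ.symm j)
  · ext c; simpa using congrFun hh (σ.symm c)

end Matrix

section StructureVectors

variable {F : Type*} [Field F] {n : ℕ}

def tensorSV (u w : Fin n → F) : Fin n → Fin n → Fin n → F :=
  fun a b c => u a * u b * w c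

theorem actSV_tensorSV (g : GL (Fin n) F) (u w : Fin n → F) :
    actSV g (tensorSV u w) =
      tensorSV (u ᵥ* (g : Matrix (Fin n) (Fin n) F))
        (((g⁻¹ : GL (Fin n) F) : Matrix (Fin n) (Fin n) F) *ᵥ w) := by
  ext a b c
  simp only [actSV, tensorSV, vecMul, mulVec, dotProduct]
  rw [Finset.sum_mul_sum]
  simp_rw [Finset.sum_mul, Finset.mul_sum]
  refine Finset.sum_congr rfl fun i _ => Finset.sum_congr rfl fun j _ =>
    Finset.sum_congr rfl fun k _ => by ring

theorem smul_tensorSV (t : F) (u w : Fin n → F) : t • tensorSV u w = tensorSV u (t • w) := by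
  ext a b c; simp only [tensorSV, Pi.smul_apply, smul_eq_mul]; ring

theorem orbitSV_tensorSV_single {i₀ i₁ : Fin n} (hi : i₀ ≠ i₁) :
    orbitSV (tensorSV (Pi.single i₀ (1 : F)) (Pi.single i₁ 1)) =
      {μ | ∃ u w : Fin n → F, u ≠ 0 ∧ w ≠ 0 ∧ u ⬝ᵥ w = 0 ∧ tensorSV u w = μ} := by
  ext μ
  constructor
  · rintro ⟨g, rfl⟩
    have hg : (g : Matrix (Fin n) (Fin n) F) * ((g⁻¹ : GL (Fin n) F) : Matrix _ _ F) = 1 :=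
      g.mul_inv
    refine ⟨_, _, ?_, ?_, ?_, (actSV_tensorSV g _ _).symm⟩
    · intro h
      have := congrArg (· ᵥ* ((g⁻¹ : GL (Fin n) F) : Matrix (Fin n) (Fin n) F)) h
      simp only [vecMul_vecMul, hg, vecMul_one, zero_vecMul] at this
      simp at this
    · intro h
      have := congrArg ((g : Matrix (Fin n) (Fin n) F) *ᵥ ·) h
      simp only [mulVec_mulVec, hg, one_mulVec, mulVec_zero] at this
      simp at this
    · rw [← dotProduct_mulVec, mulVec_mulVec, hg, one_mulVec]
      simp [hi.symm]
  · rintro ⟨u, w, hu, hw, huw, rfl⟩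
    obtain ⟨g, h, hgh, hg, hh⟩ := exists_mul_eq_one_row_eq_col_eq hi hu hw huw
    refine ⟨⟨g, h, hgh, mul_eq_one_comm.mp hgh⟩, ?_⟩
    rw [actSV_tensorSV, single_one_vecMul, mulVec_single_one]
    exact congrArg₂ tensorSV hg.symm hh.symm

theorem subset_zClosure (S : Set (Fin n → Fin n → Fin n → F)) : S ⊆ zClosure S :=
  fun μ hμ _ hp => hp μ hμ

theorem mul_sq_eq_of_mem_zClosure {S : Set (Fin n → Fin n → Fin n → F)}
    (hS : ∀ lam ∈ S, ∃ u w, tensorSV u w = lam) {μ : Fin n → Fin n → Fin n → F}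
    (hμ : μ ∈ zClosure S) (a b c a₀ b₀ c₀ : Fin n) :
    μ a b c * μ a₀ b₀ c₀ ^ 2 = μ a b₀ c₀ * μ b b₀ c₀ * μ a₀ a₀ c := by
  have := hμ (X (a, b, c) * X (a₀, b₀, c₀) ^ 2 - X (a, b₀, c₀) * X (b, b₀, c₀) * X (a₀, a₀, c))
    (by
      rintro _ hlam
      obtain ⟨u, w, rfl⟩ := hS _ hlam
      simp only [map_sub, map_mul, map_pow, MvPolynomial.eval_X, tensorSV]
      ring)
  simpa [sub_eq_zero] using this

theorem sum_mul_eq_zero_of_mem_zClosure {S : Set (Fin n → Fin n → Fin n → F)}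
    (hS : ∀ lam ∈ S, ∃ u w, u ⬝ᵥ w = 0 ∧ tensorSV u w = lam) {μ : Fin n → Fin n → Fin n → F}
    (hμ : μ ∈ zClosure S) (a a' b c : Fin n) :
    ∑ k, μ k b c * μ a a' k = 0 := by
  have := hμ (∑ k, X (k, b, c) * X (a, a', k))
    (by
      rintro _ hlam
      obtain ⟨u, w, huw, rfl⟩ := hS _ hlam
      simp only [map_sum, map_mul, MvPolynomial.eval_X, tensorSV]
      rw [← mul_zero (u b * w c * u a * u a'), ← huw, dotProduct, Finset.mul_sum]
      exact Finset.sum_congr rfl fun k _ => by ring)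
  simpa using this

theorem exists_tensorSV_eq {μ : Fin n → Fin n → Fin n → F} (hμ : μ ≠ 0)
    (hrank : ∀ a b c a₀ b₀ c₀, μ a b c * μ a₀ b₀ c₀ ^ 2 = μ a b₀ c₀ * μ b b₀ c₀ * μ a₀ a₀ c)
    (htrace : ∀ a a' b c, ∑ k, μ k b c * μ a a' k = 0) :
    ∃ u w : Fin n → F, u ≠ 0 ∧ w ≠ 0 ∧ u ⬝ᵥ w = 0 ∧ tensorSV u w = μ := by
  obtain ⟨a₀, b₀, c₀, hm⟩ : ∃ a₀ b₀ c₀, μ a₀ b₀ c₀ ≠ 0 := by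
    simpa [funext_iff] using hμ
  set u : Fin n → F := fun a => μ a b₀ c₀
  set w : Fin n → F := fun c => μ a₀ a₀ c / μ a₀ b₀ c₀ ^ 2
  have hμ_eq : tensorSV u w = μ := by
    ext a b c
    simp only [tensorSV, u, w]
    rw [mul_div_assoc', div_eq_iff (pow_ne_zero 2 hm), hrank]
  refine ⟨u, w, ?_, ?_, ?_, hμ_eq⟩
  · intro h
    exact hμ (by rw [← hμ_eq, h]; ext; simp [tensorSV])
  · intro h
    exact hμ (by rw [← hμ_eq, h]; ext; simp [tensorSV])
  · simp only [dotProduct, u, w, mul_div_assoc']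
    rw [← Finset.sum_div, htrace, zero_div]

theorem zero_mem_zClosure_of_smul_mem [Infinite F] {S : Set (Fin n → Fin n → Fin n → F)}
    {x : Fin n → Fin n → Fin n → F} (hS : ∀ t : F, t ≠ 0 → t • x ∈ S) : 0 ∈ zClosure S :=
  fun p hp => p.eval_zero_eq_zero_of_eval_smul_eq_zero (fun s => x s.1 s.2.1 s.2.2)
    fun t ht => (hp _ (hS t ht) :)

end StructureVectors

/-- over an infinite field, `n ≥ 2`, the Zariski closure of the orbit of
the structure vector `δ_n` (only nonzero entry `δ_{112} = 1`) is `O(δ_n) ∪ {0}`: the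
only proper degeneration of `d_n` is to the abelian algebra. -/
theorem dn_orbit_closure {F : Type*} [Field F] [Infinite F] {n : ℕ} (hn : 2 ≤ n)
    (delta : Fin n → Fin n → Fin n → F)
    (hdelta : ∀ i j k : Fin n,
      delta i j k =
        if i = (⟨0, by omega⟩ : Fin n) ∧ j = (⟨0, by omega⟩ : Fin n) ∧
            k = (⟨1, by omega⟩ : Fin n) then 1
        else 0) :
    zClosure (orbitSV delta) = orbitSV delta ∪ {0} := by
  set i₀ : Fin n := ⟨0, by omega⟩
  set i₁ : Fin n := ⟨1, by omega⟩
  have hi : i₀ ≠ i₁ := by simp [i₀, i₁, Fin.ext_iff]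
  have hδ : delta = tensorSV (Pi.single i₀ 1) (Pi.single i₁ 1) := by
    ext i j k
    by_cases ha : i = i₀ <;> by_cases hb : j = i₀ <;> by_cases hc : k = i₁ <;>
      simp [hdelta, tensorSV, ha, hb, hc]
  rw [hδ, orbitSV_tensorSV_single hi]
  set T := {μ | ∃ u w : Fin n → F, u ≠ 0 ∧ w ≠ 0 ∧ u ⬝ᵥ w = 0 ∧ tensorSV u w = μ}
  refine subset_antisymm (fun μ hμ => ?_) (Set.union_subset (subset_zClosure T) ?_)
  · by_cases hμ0 : μ = 0
    · exact Or.inr hμ0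
    refine Or.inl (exists_tensorSV_eq hμ0 ?_ ?_)
    · exact mul_sq_eq_of_mem_zClosure (S := T) (fun _ ⟨u, w, _, _, _, h⟩ => ⟨u, w, h⟩) hμ
    · exact sum_mul_eq_zero_of_mem_zClosure (S := T)
        (fun _ ⟨u, w, _, _, huw, h⟩ => ⟨u, w, huw, h⟩) hμ
  · refine Set.singleton_subset_iff.mpr
      (zero_mem_zClosure_of_smul_mem (x := tensorSV (Pi.single i₀ 1) (Pi.single i₁ 1)) ?_)
    exact fun t ht => ⟨_, t • _, by simp, by simp [ht], by simp [hi], (smul_tensorSV t _ _).symm⟩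
end
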